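/- For any d×d density matrix ρ, the modified trace distance measure of coherence satisfies C'_tr(ρ) ≥ 1 − Σ_i ((√ρ)_{ii})², where (√ρ)_{ii} are the diagonal entries of the positive semidefinite square root of ρ; i.e., for every λ ≥ 0 and every diagonal density matrix δ one has ‖ρ − λδ‖_tr ≥ 1 − Σ_i ((√ρ)_{ii})². -/

import Mathlib

open Matrix
open scoped ComplexOrder

/-- The positive semidefinite square root of a positive semidefinite matrix
(removed from Mathlib; restored here with its old definition). -/
noncomputable def Matrix.PosSemidef.sqrt {n 𝕜 : Type*} [Fintype n] [DecidableEq n] [RCLike 𝕜]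
    {A : Matrix n n 𝕜} (hA : A.PosSemidef) : Matrix n n 𝕜 :=
  hA.1.eigenvectorUnitary.1 * diagonal ((↑) ∘ (√·) ∘ hA.1.eigenvalues) *
  (star hA.1.eigenvectorUnitary : Matrix n n 𝕜)

/-- The trace norm of a matrix `A`: `‖A‖_tr = Tr √(AᴴA)`. -/
noncomputable def traceNorm {d : ℕ} (A : Matrix (Fin d) (Fin d) ℂ) : ℝ :=
  ((Matrix.posSemidef_conjTranspose_mul_self A).sqrt.trace).re

/-- The Hilbert–Schmidt norm of a matrix `A`: `‖A‖_HS = √(Tr(AᴴA))`. -/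
noncomputable def hsNorm {d : ℕ} (A : Matrix (Fin d) (Fin d) ℂ) : ℝ :=
  Real.sqrt (((Aᴴ * A).trace).re)

/-!
Write `ρ = R²` with `R = √ρ ≥ 0` and `λδ = S²` with `S ≥ 0` diagonal, and let `U` be the sign
of `R - S`, so that `-1 ≤ U ≤ 1` and `(R - S) U = U (R - S) = |R - S|`. Since
`2 (R² - S²) = (R + S)(R - S) + (R - S)(R + S)`, one gets `Tr ((R² - S²) U) = Tr ((R + S) |R - S|)`,
which exceeds `Tr (R - S)²` by `2 Tr (S (R - S)⁺) + 2 Tr (R (R - S)⁻) ≥ 0`; and `Tr (A U) ≤ Tr |A|`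
because `|A| - A U = A⁺ (1 - U) + A⁻ (1 + U)`. This is the Powers–Størmer inequality
`Tr (R - S)² ≤ ‖R² - S²‖_tr`. Finally, `S` being diagonal,
`Tr (R - S)² = 1 - ∑ᵢ (2 Rᵢᵢ Sᵢᵢ - Sᵢᵢ²) ≥ 1 - ∑ᵢ Rᵢᵢ²`.
-/

open scoped MatrixOrder

namespace Matrix

variable {n 𝕜 : Type*} [Fintype n] [DecidableEq n] [RCLike 𝕜]

lemma trace_mul_nonneg {A B : Matrix n n 𝕜} (hA : 0 ≤ A) (hB : 0 ≤ B) : 0 ≤ (A * B).trace := by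
  obtain ⟨C, rfl⟩ := CStarAlgebra.nonneg_iff_eq_star_mul_self.mp hB
  rw [← mul_assoc, trace_mul_comm, ← mul_assoc, star_eq_conjTranspose]
  exact (hA.posSemidef.mul_mul_conjTranspose_same C).trace_nonneg

lemma exists_mul_eq_cfcAbs {A : Matrix n n 𝕜} (hA : IsSelfAdjoint A) :
    ∃ U : Matrix n n 𝕜, -1 ≤ U ∧ U ≤ 1 ∧ A * U = CFC.abs A ∧ U * A = CFC.abs A := by
  have hcont (f : ℝ → ℝ) : ContinuousOn f (spectrum ℝ A) := A.finite_real_spectrum.continuousOn f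
  refine ⟨cfc (fun x : ℝ ↦ (SignType.sign x : ℝ)) A, ?_, ?_, ?_, ?_⟩
  · simpa using
      algebraMap_le_cfc _ (-1 : ℝ) A (fun x _ ↦ by cases SignType.sign x <;> simp) (hcont _)
  · exact cfc_le_one _ A fun x _ ↦ by cases SignType.sign x <;> simp
  · conv_lhs => enter [1]; rw [← cfc_id' ℝ A]
    rw [← cfc_mul _ _ A (hcont _) (hcont _), CFC.abs_eq_cfc_norm A]
    simp [self_mul_sign]
  · conv_lhs => enter [2]; rw [← cfc_id' ℝ A]
    rw [← cfc_mul _ _ A (hcont _) (hcont _), CFC.abs_eq_cfc_norm A]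
    simp [sign_mul_self]

lemma trace_mul_le_trace_cfcAbs {A U : Matrix n n 𝕜} (hA : IsSelfAdjoint A) (hU₁ : -1 ≤ U)
    (hU₂ : U ≤ 1) : (A * U).trace ≤ (CFC.abs A).trace := by
  have key : (CFC.abs A).trace - (A * U).trace =
      (A⁺ * (1 - U)).trace + (A⁻ * (1 + U)).trace := by
    rw [← CFC.posPart_add_negPart A, ← trace_add, ← trace_sub]
    nth_rw 3 [← CFC.posPart_sub_negPart A]
    congr 1; noncomm_ring
  have h₁ : 0 ≤ 1 - U := sub_nonneg.2 hU₂
  have h₂ : 0 ≤ 1 + U := by simpa [add_comm] using neg_le_iff_add_nonneg.1 hU₁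
  rw [← sub_nonneg, key]
  exact add_nonneg (trace_mul_nonneg (CFC.posPart_nonneg A) h₁)
    (trace_mul_nonneg (CFC.negPart_nonneg A) h₂)

lemma trace_sub_sq_le_trace_add_mul_cfcAbs {R S : Matrix n n 𝕜} (hR : 0 ≤ R) (hS : 0 ≤ S) :
    ((R - S) ^ 2).trace ≤ ((R + S) * CFC.abs (R - S)).trace := by
  have hΔ : IsSelfAdjoint (R - S) := hR.isSelfAdjoint.sub hS.isSelfAdjoint
  have hP := CFC.posPart_nonneg (R - S)
  have hN := CFC.negPart_nonneg (R - S)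
  have hsq : (R - S) ^ 2 = (R - S) * ((R - S)⁺ - (R - S)⁻) := by
    rw [CFC.posPart_sub_negPart (R - S), sq]
  rw [← CFC.posPart_add_negPart (R - S), hsq, ← sub_nonneg, ← trace_sub]
  generalize (R - S)⁺ = P at *
  generalize (R - S)⁻ = N at *
  have key : (R + S) * (P + N) - (R - S) * (P - N) = (2 : 𝕜) • (S * P + R * N) := by
    rw [two_smul]; noncomm_ring
  rw [key, trace_smul, trace_add, smul_eq_mul]
  exact mul_nonneg zero_le_two (add_nonneg (trace_mul_nonneg hS hP) (trace_mul_nonneg hR hN))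

theorem trace_sub_sq_le_trace_cfcAbs_sq_sub {R S : Matrix n n 𝕜} (hR : 0 ≤ R) (hS : 0 ≤ S) :
    ((R - S) ^ 2).trace ≤ (CFC.abs (R ^ 2 - S ^ 2)).trace := by
  obtain ⟨U, hU₁, hU₂, hΔU, hUΔ⟩ := exists_mul_eq_cfcAbs (hR.isSelfAdjoint.sub hS.isSelfAdjoint)
  have hA : IsSelfAdjoint (R ^ 2 - S ^ 2) := (hR.isSelfAdjoint.pow 2).sub (hS.isSelfAdjoint.pow 2)
  have hsymm : (2 : 𝕜) • (R ^ 2 - S ^ 2) = (R + S) * (R - S) + (R - S) * (R + S) := by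
    rw [two_smul]; noncomm_ring
  have hAU : ((R ^ 2 - S ^ 2) * U).trace = ((R + S) * CFC.abs (R - S)).trace := by
    have h₁ : ((R + S) * (R - S) * U).trace = ((R + S) * CFC.abs (R - S)).trace := by
      rw [mul_assoc, hΔU]
    have h₂ : ((R - S) * (R + S) * U).trace = ((R + S) * CFC.abs (R - S)).trace := by
      rw [trace_mul_cycle, hUΔ, trace_mul_comm]
    refine mul_left_cancel₀ (two_ne_zero (α := 𝕜)) ?_
    rw [← smul_eq_mul, ← trace_smul, ← smul_mul_assoc, hsymm, add_mul, trace_add, h₁, h₂, two_mul]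
  calc ((R - S) ^ 2).trace ≤ ((R + S) * CFC.abs (R - S)).trace :=
        trace_sub_sq_le_trace_add_mul_cfcAbs hR hS
    _ = ((R ^ 2 - S ^ 2) * U).trace := hAU.symm
    _ ≤ (CFC.abs (R ^ 2 - S ^ 2)).trace := trace_mul_le_trace_cfcAbs hA hU₁ hU₂

lemma PosSemidef.sqrt_eq_cfcSqrt {A : Matrix n n 𝕜} (hA : A.PosSemidef) :
    hA.sqrt = CFC.sqrt A := by
  have h : hA.sqrt = hA.1.cfc Real.sqrt := rfl
  rw [h, CFC.sqrt_eq_cfc, cfc_nnreal_eq_real _ A hA.nonneg, hA.1.cfc_eq]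
  congr 1 with x
  exact Real.sqrt.eq_1 x

lemma PosSemidef.exists_diagonal_sq_eq_of_isDiag {D : Matrix n n 𝕜} (hD : D.PosSemidef)
    (hDd : D.IsDiag) : ∃ s : n → ℝ, 0 ≤ diagonal (fun i ↦ (s i : 𝕜)) ∧
      diagonal (fun i ↦ (s i : 𝕜)) ^ 2 = D := by
  refine ⟨fun i ↦ √(RCLike.re (D i i)), ?_, ?_⟩
  · exact (posSemidef_diagonal_iff.mpr fun i ↦
      RCLike.ofReal_nonneg.mpr (Real.sqrt_nonneg _)).nonneg
  · conv_rhs => rw [← hDd.diagonal_diag]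
    rw [sq, diagonal_mul_diagonal]
    congr 1 with i
    rw [← RCLike.ofReal_mul, Real.mul_self_sqrt (RCLike.nonneg_iff.mp (hD.diag_nonneg)).1]
    exact hD.1.coe_re_apply_self i

lemma re_trace_sq_sub_sum_sq_le (R : Matrix n n 𝕜) (s : n → ℝ) :
    RCLike.re (R ^ 2).trace - ∑ i, RCLike.re (R i i) ^ 2 ≤
      RCLike.re ((R - diagonal (fun i ↦ (s i : 𝕜))) ^ 2).trace := by
  set D := diagonal (fun i ↦ (s i : 𝕜))
  have hexp : ((R - D) ^ 2).trace = (R ^ 2).trace - 2 * (R * D).trace + (D ^ 2).trace := by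
    rw [sq, sq, sq, sub_mul, mul_sub, mul_sub, trace_sub, trace_sub, trace_sub, trace_mul_comm D R]
    ring
  have hRD : RCLike.re (R * D).trace = ∑ i, RCLike.re (R i i) * s i := by
    simp [D, trace, mul_diagonal]
  have hDD : RCLike.re (D ^ 2).trace = ∑ i, s i ^ 2 := by
    simp [D, sq, trace]
  have hsq : ∑ i, (RCLike.re (R i i) - s i) ^ 2
      = ∑ i, RCLike.re (R i i) ^ 2 - 2 * ∑ i, RCLike.re (R i i) * s i + ∑ i, s i ^ 2 := by
    simp only [sub_sq, Finset.sum_add_distrib, Finset.sum_sub_distrib, Finset.mul_sum, mul_assoc]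
  have hnonneg : 0 ≤ ∑ i, (RCLike.re (R i i) - s i) ^ 2 := by positivity
  rw [hexp, map_add, map_sub, RCLike.ofNat_mul_re, hRD, hDD]
  linarith

end Matrix

lemma traceNorm_eq_re_trace_cfcAbs {d : ℕ} (A : Matrix (Fin d) (Fin d) ℂ) :
    traceNorm A = (CFC.abs A).trace.re := by
  rw [traceNorm, PosSemidef.sqrt_eq_cfcSqrt, CFC.abs, star_eq_conjTranspose]

lemma one_sub_sum_sq_diag_sqrt_le_traceNorm_sub {d : ℕ} {ρ σ : Matrix (Fin d) (Fin d) ℂ}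
    (hρ : ρ.PosSemidef) (hρtr : ρ.trace = 1) (hσ : σ.PosSemidef) (hσd : σ.IsDiag) :
    1 - ∑ i, ((hρ.sqrt i i).re) ^ 2 ≤ traceNorm (ρ - σ) := by
  obtain ⟨s, hS, hS2⟩ := hσ.exists_diagonal_sq_eq_of_isDiag hσd
  have hR : 0 ≤ hρ.sqrt := hρ.sqrt_eq_cfcSqrt ▸ CFC.sqrt_nonneg ρ
  have hR2 : hρ.sqrt ^ 2 = ρ := by
    rw [hρ.sqrt_eq_cfcSqrt, sq, CFC.sqrt_mul_sqrt_self ρ hρ.nonneg]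
  have hPS := trace_sub_sq_le_trace_cfcAbs_sq_sub hR hS
  rw [hR2, hS2] at hPS
  calc 1 - ∑ i, ((hρ.sqrt i i).re) ^ 2
      = RCLike.re (hρ.sqrt ^ 2).trace - ∑ i, RCLike.re (hρ.sqrt i i) ^ 2 := by
        rw [hR2, hρtr]; rfl
    _ ≤ RCLike.re ((hρ.sqrt - diagonal (fun i ↦ (s i : ℂ))) ^ 2).trace :=
        re_trace_sq_sub_sum_sq_le _ s
    _ ≤ (CFC.abs (ρ - σ)).trace.re := (Complex.le_def.mp hPS).1
    _ = traceNorm (ρ - σ) := (traceNorm_eq_re_trace_cfcAbs _).symm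

/-- For any density matrix `ρ`, the modified trace distance measure of coherence
satisfies `C'_tr(ρ) ≥ 1 − Σ_i ((√ρ)_{ii})²`; i.e., for every `λ ≥ 0` and every
diagonal density matrix `δ`, `‖ρ − λδ‖_tr ≥ 1 − Σ_i ((√ρ)_{ii})²`. -/
theorem modified_trace_coherence_ge {d : ℕ}
    (ρ : Matrix (Fin d) (Fin d) ℂ) (hρ : ρ.PosSemidef) (hρtr : ρ.trace = 1) :
    sInf {x : ℝ | ∃ (l : ℝ) (δ : Matrix (Fin d) (Fin d) ℂ),
        0 ≤ l ∧ δ.PosSemidef ∧ δ.trace = 1 ∧ δ.IsDiag ∧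
        x = traceNorm (ρ - l • δ)}
      ≥ 1 - ∑ i, ((hρ.sqrt i i).re) ^ 2 ∧
    (∀ (l : ℝ), 0 ≤ l → ∀ (δ : Matrix (Fin d) (Fin d) ℂ), δ.PosSemidef →
      δ.trace = 1 → δ.IsDiag →
      traceNorm (ρ - l • δ) ≥ 1 - ∑ i, ((hρ.sqrt i i).re) ^ 2) := by
  have hbound (l : ℝ) (hl : 0 ≤ l) (δ : Matrix (Fin d) (Fin d) ℂ) (hδ : δ.PosSemidef)
      (hδd : δ.IsDiag) : 1 - ∑ i, ((hρ.sqrt i i).re) ^ 2 ≤ traceNorm (ρ - l • δ) :=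
    one_sub_sum_sq_diag_sqrt_le_traceNorm_sub hρ hρtr (hδ.smul hl) (hδd.smul l)
  refine ⟨le_csInf ⟨_, 0, diagonal ρ.diag, le_rfl, ?_, ?_, isDiag_diagonal _, rfl⟩ ?_,
    fun l hl δ hδ _ hδd ↦ hbound l hl δ hδ hδd⟩
  · exact posSemidef_diagonal_iff.mpr fun i ↦ hρ.diag_nonneg
  · rwa [trace_diagonal]
  · rintro _ ⟨l, δ, hl, hδ, -, hδd, rfl⟩
    exact hbound l hl δ hδ hδd
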